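/- arXiv:2010.11082 — 9 statements merged into one kernel-verified Lean document; each statement's English description precedes it below -/
import Mathlib

section
/- Let H = ℝ^d with the Euclidean inner product, let W ⊆ H be a nonempty convex set, let (X, 𝒳, μ) be a probability space, and let ℓ : H × X → ℝ be a loss function such that for every x ∈ X the map w ↦ ℓ(w, x) is differentiable and convex, and w ↦ ∇ℓ(w, x) is jointly measurable. Let w* ∈ W satisfy ∫ ∇ℓ(w*, x) dμ(x) = 0 and G := ∫ ‖∇ℓ(w*, x)‖² dμ(x) < ∞. Fix n ≥ 1 and α > 0, and suppose that the set of samples D = (x₁, …, xₙ) ∈ Xⁿ for which the empirical risk L̂(·, D) := (1/n) Σᵢ₌₁ⁿ ℓ(·, xᵢ) is α-strongly convex on W has μⁿ-measure at least 5/6. Let D ↦ w_D be a measurable map from Xⁿ to W such that L̂(w_D, D) ≤ L̂(w, D) for all w ∈ W and all D. Then μⁿ{ D : ‖w_D − w*‖ ≤ √(40 G / (n α²)) } ≥ 11/15. -/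
open MeasureTheory RealInnerProductSpace

lemma aux_pi_map_eval {X : Type*} [MeasurableSpace X] (μ : Measure X) [IsProbabilityMeasure μ]
    {n : ℕ} (i : Fin n) :
    (Measure.pi fun _ : Fin n => μ).map (Function.eval i) = μ := by
  ext s hs
  rw [Measure.map_apply (measurable_pi_apply i) hs, Set.eval_preimage, Measure.pi_pi]
  calc (∏ k : Fin n, μ (Function.update (fun _ => Set.univ) i s k))
      = ∏ k : Fin n, if k = i then μ s else 1 := by
        refine Finset.prod_congr rfl fun k _ => ?_
        rw [Function.update_apply]
        split <;> simp
    _ = μ s := by rw [Finset.prod_ite_eq' Finset.univ i fun _ => μ s]; simp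

lemma aux_pi_map_pair {X : Type*} [MeasurableSpace X] (μ : Measure X) [IsProbabilityMeasure μ]
    {n : ℕ} {i j : Fin n} (hij : i ≠ j) :
    (Measure.pi fun _ : Fin n => μ).map (fun D => (D i, D j)) = μ.prod μ := by
  have hT : Measurable (fun D : Fin n → X => (D i, D j)) :=
    (measurable_pi_apply i).prodMk (measurable_pi_apply j)
  refine (Measure.prod_eq fun s t hs ht => ?_).symm
  rw [Measure.map_apply hT (hs.prod ht)]
  have hpre : (fun D : Fin n → X => (D i, D j)) ⁻¹' (s ×ˢ t)
      = Set.pi Set.univ (Function.update (Function.update (fun _ => Set.univ) i s) j t) := by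
    ext D
    simp only [Set.mem_preimage, Set.mem_prod, Set.mem_pi, Set.mem_univ, true_implies,
      Function.update_apply]
    constructor
    · rintro ⟨h1, h2⟩ k
      split_ifs with hkj hki
      · exact hkj ▸ h2
      · exact hki ▸ h1
      · trivial
    · intro h
      refine ⟨?_, ?_⟩
      · have := h i; simpa [hij] using this
      · have := h j; simpa using this
  rw [hpre, Measure.pi_pi]
  calc (∏ k : Fin n, μ (Function.update (Function.update (fun _ => Set.univ) i s) j t k))
      = ∏ k : Fin n, (if k = j then μ t else 1) * (if k = i then μ s else 1) := by
        refine Finset.prod_congr rfl fun k _ => ?_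
        rcases eq_or_ne k j with rfl | hkj
        · simp [hij.symm]
        · rw [Function.update_of_ne hkj, Function.update_apply]
          split <;> simp [hkj]
    _ = μ s * μ t := by
        rw [Finset.prod_mul_distrib, Finset.prod_ite_eq' Finset.univ j fun _ => μ t,
          Finset.prod_ite_eq' Finset.univ i fun _ => μ s]
        simp [mul_comm]

set_option maxHeartbeats 1000000 in
/-- If the empirical risk is `α`-strongly convex on `W` with probability at least `5/6`
over `n` i.i.d. samples, `∇L_𝒟(w*) = 0` and `G = E‖∇ℓ(w*, x)‖²`, then any empirical risk
minimizer `w_D` satisfies `‖w_D − w*‖ ≤ √(40 G/(n α²))` with probability at least `11/15`. -/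
theorem stmt_0
    (d : ℕ)
    {X : Type*} [MeasurableSpace X] (μ : Measure X) [IsProbabilityMeasure μ]
    (W : Set (EuclideanSpace ℝ (Fin d))) (hWne : W.Nonempty) (hWconv : Convex ℝ W)
    (ℓ : EuclideanSpace ℝ (Fin d) → X → ℝ)
    (g : EuclideanSpace ℝ (Fin d) → X → EuclideanSpace ℝ (Fin d))
    (hdiff : ∀ (x : X) (w : EuclideanSpace ℝ (Fin d)),
      HasGradientAt (fun w' => ℓ w' x) (g w x) w)
    (hconv : ∀ x : X, ConvexOn ℝ Set.univ (fun w => ℓ w x))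
    (hmeas : Measurable (fun p : EuclideanSpace ℝ (Fin d) × X => g p.1 p.2))
    (wstar : EuclideanSpace ℝ (Fin d)) (hwstarW : wstar ∈ W)
    (hgrad0 : ∫ x, g wstar x ∂μ = 0)
    (hint : Integrable (fun x => ‖g wstar x‖ ^ 2) μ)
    (G : ℝ) (hG : G = ∫ x, ‖g wstar x‖ ^ 2 ∂μ)
    (n : ℕ) (hn : 1 ≤ n) (α : ℝ) (hα : 0 < α)
    (hsc : (5 : ENNReal) / 6 ≤ (Measure.pi fun _ : Fin n => μ)
      {D : Fin n → X | ∀ w ∈ W, ∀ w' ∈ W,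
        (1 / n : ℝ) * ∑ i, ℓ w (D i) + ⟪(1 / n : ℝ) • ∑ i, g w (D i), w' - w⟫
            + α / 2 * ‖w' - w‖ ^ 2
          ≤ (1 / n : ℝ) * ∑ i, ℓ w' (D i)})
    (wD : (Fin n → X) → EuclideanSpace ℝ (Fin d))
    (hwDmeas : Measurable wD)
    (hwDW : ∀ D, wD D ∈ W)
    (hwDmin : ∀ (D : Fin n → X), ∀ w ∈ W,
      (1 / n : ℝ) * ∑ i, ℓ (wD D) (D i) ≤ (1 / n : ℝ) * ∑ i, ℓ w (D i)) :
    (11 : ENNReal) / 15 ≤ (Measure.pi fun _ : Fin n => μ)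
      {D : Fin n → X | ‖wD D - wstar‖ ≤ Real.sqrt (40 * G / (n * α ^ 2))} := by
  classical
  set ν : Measure (Fin n → X) := Measure.pi fun _ : Fin n => μ with hνdef
  have hgm : Measurable (g wstar) := hmeas.comp (measurable_const.prodMk measurable_id)
  have hgL2 : MemLp (g wstar) 2 μ :=
    (memLp_two_iff_integrable_sq_norm hgm.aestronglyMeasurable).2 hint
  have hgint : Integrable (g wstar) μ := hgL2.integrable one_le_two
  have hG0 : 0 ≤ G := hG ▸ integral_nonneg fun x => sq_nonneg _
  have hn0 : (0:ℝ) < n := by exact_mod_cast hn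
  set S : (Fin n → X) → EuclideanSpace ℝ (Fin d) := fun D => ∑ i, g wstar (D i) with hSdef
  -- integrability of single-coordinate squared norms over ν
  have hint_eval : ∀ i : Fin n, Integrable (fun D : Fin n → X => ‖g wstar (D i)‖ ^ 2) ν := by
    intro i
    have h1 := aux_pi_map_eval μ i
    exact (integrable_map_measure (by rw [h1]; exact hint.aestronglyMeasurable)
      (measurable_pi_apply i).aemeasurable).1 (by rw [h1]; exact hint)
  have hinner_meas : ∀ i j : Fin n,
      Measurable (fun D : Fin n → X => (⟪g wstar (D i), g wstar (D j)⟫ : ℝ)) := fun i j =>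
    (hgm.comp (measurable_pi_apply i)).inner (hgm.comp (measurable_pi_apply j))
  have hinner_int : ∀ i j : Fin n,
      Integrable (fun D : Fin n → X => (⟪g wstar (D i), g wstar (D j)⟫ : ℝ)) ν := by
    intro i j
    refine Integrable.mono' (((hint_eval i).add (hint_eval j)).const_mul (1/2))
      (hinner_meas i j).aestronglyMeasurable (Filter.Eventually.of_forall fun D => ?_)
    have h1 := abs_real_inner_le_norm (g wstar (D i)) (g wstar (D j))
    have h2 : ‖g wstar (D i)‖ * ‖g wstar (D j)‖
        ≤ (‖g wstar (D i)‖ ^ 2 + ‖g wstar (D j)‖ ^ 2) / 2 := by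
      nlinarith [sq_nonneg (‖g wstar (D i)‖ - ‖g wstar (D j)‖)]
    rw [Real.norm_eq_abs]
    calc |(⟪g wstar (D i), g wstar (D j)⟫ : ℝ)| ≤ ‖g wstar (D i)‖ * ‖g wstar (D j)‖ := h1
      _ ≤ (‖g wstar (D i)‖ ^ 2 + ‖g wstar (D j)‖ ^ 2) / 2 := h2
      _ = 1/2 * (‖g wstar (D i)‖ ^ 2 + ‖g wstar (D j)‖ ^ 2) := by ring
  have hexp : ∀ D, ‖S D‖ ^ 2 = ∑ i, ∑ j, (⟪g wstar (D i), g wstar (D j)⟫ : ℝ) := by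
    intro D
    rw [← real_inner_self_eq_norm_sq, hSdef]
    rw [sum_inner]
    exact Finset.sum_congr rfl fun i _ => inner_sum _ _ _
  have hSint : Integrable (fun D => ‖S D‖ ^ 2) ν := by
    have h1 : (fun D => ‖S D‖ ^ 2)
        = fun D => ∑ i, ∑ j, (⟪g wstar (D i), g wstar (D j)⟫ : ℝ) := funext hexp
    rw [h1]
    exact integrable_finset_sum _ fun i _ => integrable_finset_sum _ fun j _ => hinner_int i j
  -- diagonal terms
  have hdiag : ∀ i : Fin n, ∫ D, (⟪g wstar (D i), g wstar (D i)⟫ : ℝ) ∂ν = G := by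
    intro i
    have h1 := aux_pi_map_eval μ i
    have h2 : ∫ D, (⟪g wstar (D i), g wstar (D i)⟫ : ℝ) ∂ν
        = ∫ x, (⟪g wstar x, g wstar x⟫ : ℝ) ∂(ν.map (Function.eval i)) := by
      rw [integral_map (measurable_pi_apply i).aemeasurable
        (by rw [h1]; exact (hgm.inner hgm).aestronglyMeasurable)]
    rw [h2, h1, hG]
    exact integral_congr_ae (Filter.Eventually.of_forall fun x => real_inner_self_eq_norm_sq _)
  -- off-diagonal terms
  have hoff : ∀ i j : Fin n, i ≠ j →
      ∫ D, (⟪g wstar (D i), g wstar (D j)⟫ : ℝ) ∂ν = 0 := by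
    intro i j hij
    have h2 := aux_pi_map_pair μ hij
    have hTmeas : Measurable (fun D : Fin n → X => (D i, D j)) :=
      (measurable_pi_apply i).prodMk (measurable_pi_apply j)
    have hFm : AEStronglyMeasurable (fun p : X × X => (⟪g wstar p.1, g wstar p.2⟫ : ℝ))
        (μ.prod μ) :=
      ((hgm.comp measurable_fst).inner (hgm.comp measurable_snd)).aestronglyMeasurable
    have step1 : ∫ D, (⟪g wstar (D i), g wstar (D j)⟫ : ℝ) ∂ν
        = ∫ p : X × X, (⟪g wstar p.1, g wstar p.2⟫ : ℝ) ∂(μ.prod μ) := by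
      rw [← h2, integral_map hTmeas.aemeasurable (by rw [h2]; exact hFm)]
    rw [step1]
    have hFint : Integrable (fun p : X × X => (⟪g wstar p.1, g wstar p.2⟫ : ℝ)) (μ.prod μ) := by
      refine Integrable.mono' (Integrable.mul_prod (f := fun x => ‖g wstar x‖)
        (g := fun x => ‖g wstar x‖) hgint.norm hgint.norm) hFm
        (Filter.Eventually.of_forall fun p => ?_)
      simpa using abs_real_inner_le_norm (g wstar p.1) (g wstar p.2)
    rw [MeasureTheory.integral_prod _ hFint]
    have h3 : ∀ x, ∫ y, (⟪g wstar x, g wstar y⟫ : ℝ) ∂μ = 0 := fun x => by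
      rw [integral_inner hgint, hgrad0, inner_zero_right]
    simp only [h3, integral_zero]
  -- total second moment
  have htot : ∫ D, ‖S D‖ ^ 2 ∂ν = n * G := by
    have h1 : ∫ D, ‖S D‖ ^ 2 ∂ν
        = ∑ i, ∑ j, ∫ D, (⟪g wstar (D i), g wstar (D j)⟫ : ℝ) ∂ν := by
      calc ∫ D, ‖S D‖ ^ 2 ∂ν
          = ∫ D, ∑ i, ∑ j, (⟪g wstar (D i), g wstar (D j)⟫ : ℝ) ∂ν :=
            integral_congr_ae (Filter.Eventually.of_forall fun D => hexp D)
        _ = ∑ i, ∫ D, ∑ j, (⟪g wstar (D i), g wstar (D j)⟫ : ℝ) ∂ν :=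
            integral_finset_sum _ fun i _ => integrable_finset_sum _ fun j _ => hinner_int i j
        _ = ∑ i, ∑ j, ∫ D, (⟪g wstar (D i), g wstar (D j)⟫ : ℝ) ∂ν :=
            Finset.sum_congr rfl fun i _ => integral_finset_sum _ fun j _ => hinner_int i j
    have h2 : ∀ i : Fin n, (∑ j, ∫ D, (⟪g wstar (D i), g wstar (D j)⟫ : ℝ) ∂ν) = G := by
      intro i
      rw [Finset.sum_eq_single i (fun j _ hji => hoff i j (Ne.symm hji)) (by simp), hdiag i]
    rw [h1]
    simp only [h2]
    simp [Finset.sum_const, Finset.card_univ, nsmul_eq_mul]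
  -- the bad event has measure at most 1/10
  set Bc : Set (Fin n → X) := {D | 10 * n * G < ‖S D‖ ^ 2} with hBcdef
  have hBcle : ν Bc ≤ 1 / 10 := by
    rcases eq_or_lt_of_le hG0 with hG0' | hGpos
    · have hz : ∫ D, ‖S D‖ ^ 2 ∂ν = 0 := by rw [htot, ← hG0', mul_zero]
      have hae : (fun D => ‖S D‖ ^ 2) =ᵐ[ν] 0 :=
        (integral_eq_zero_iff_of_nonneg (fun D => sq_nonneg _) hSint).1 hz
      have hnull : ν Bc = 0 := by
        refine measure_mono_null (fun D hD => ?_) (ae_iff.mp hae)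
        simp only [hBcdef, Set.mem_setOf_eq, Pi.zero_apply] at hD ⊢
        intro h0
        rw [h0, ← hG0'] at hD
        norm_num at hD
      rw [hnull]
      exact zero_le
    · have hmarkov := mul_meas_ge_le_integral_of_nonneg (μ := ν)
        (f := fun D => ‖S D‖ ^ 2) (Filter.Eventually.of_forall fun D => sq_nonneg _)
        hSint (10 * n * G)
      rw [htot] at hmarkov
      have h10 : (0:ℝ) < 10 * n * G := by positivity
      have hfin : ν {D | 10 * n * G ≤ ‖S D‖ ^ 2} ≠ ⊤ := measure_ne_top _ _
      have htoReal : (ν {D | 10 * n * G ≤ ‖S D‖ ^ 2}).toReal ≤ 1 / 10 := by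
        rw [show (1:ℝ)/10 = (n * G) / (10 * n * G) by field_simp]
        rw [le_div_iff₀ h10]
        rw [measureReal_def] at hmarkov
        linarith [hmarkov]
      calc ν Bc ≤ ν {D | 10 * n * G ≤ ‖S D‖ ^ 2} :=
            measure_mono fun D hD => show 10 * (n:ℝ) * G ≤ ‖S D‖ ^ 2 from le_of_lt hD
        _ = ENNReal.ofReal ((ν {D | 10 * n * G ≤ ‖S D‖ ^ 2}).toReal) :=
            (ENNReal.ofReal_toReal hfin).symm
        _ ≤ ENNReal.ofReal (1/10) := ENNReal.ofReal_le_ofReal htoReal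
        _ = 1 / 10 := by
            rw [ENNReal.ofReal_div_of_pos (by norm_num), ENNReal.ofReal_one,
              ENNReal.ofReal_ofNat]
  -- the good event is contained in the target event
  set A : Set (Fin n → X) := {D : Fin n → X | ∀ w ∈ W, ∀ w' ∈ W,
      (1 / n : ℝ) * ∑ i, ℓ w (D i) + ⟪(1 / n : ℝ) • ∑ i, g w (D i), w' - w⟫
          + α / 2 * ‖w' - w‖ ^ 2
        ≤ (1 / n : ℝ) * ∑ i, ℓ w' (D i)} with hAdef
  have hincl : A ∩ Bcᶜ ⊆ {D | ‖wD D - wstar‖ ≤ Real.sqrt (40 * G / (n * α ^ 2))} := by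
    rintro D ⟨hA, hB⟩
    simp only [Set.mem_compl_iff, hBcdef, Set.mem_setOf_eq, not_lt] at hB
    have hkey := hA wstar hwstarW (wD D) (hwDW D)
    have hmin := hwDmin D wstar hwstarW
    set r := ‖wD D - wstar‖ with hrdef
    have hr0 : (0:ℝ) ≤ r := norm_nonneg _
    have hs0 : (0:ℝ) ≤ ‖S D‖ := norm_nonneg _
    have hin : (1 / n : ℝ) * ⟪S D, wD D - wstar⟫ + α / 2 * r ^ 2 ≤ 0 := by
      rw [← real_inner_smul_left]
      have : (1 / n : ℝ) • S D = (1 / n : ℝ) • ∑ i, g wstar (D i) := rfl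
      rw [this]
      linarith [hkey, hmin]
    have hcs : -(⟪S D, wD D - wstar⟫ : ℝ) ≤ ‖S D‖ * r := by
      have h1 := abs_real_inner_le_norm (S D) (wD D - wstar)
      have h2 := neg_abs_le (⟪S D, wD D - wstar⟫ : ℝ)
      linarith
    have hsq : r ^ 2 ≤ 40 * G / (n * α ^ 2) := by
      rcases eq_or_lt_of_le hr0 with h0 | hrpos
      · have hz : r ^ 2 = 0 := by rw [← h0]; ring
        rw [hz]
        positivity
      · have h1 : α / 2 * r ^ 2 ≤ (1 / n : ℝ) * (‖S D‖ * r) := by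
          have h2 : (1 / n : ℝ) * (-(⟪S D, wD D - wstar⟫ : ℝ)) ≤ (1 / n : ℝ) * (‖S D‖ * r) :=
            mul_le_mul_of_nonneg_left hcs (by positivity)
          nlinarith [hin]
        have h2 : α / 2 * r ≤ (1 / n : ℝ) * ‖S D‖ := by
          have h1' : (α / 2 * r) * r ≤ ((1 / n : ℝ) * ‖S D‖) * r := by nlinarith [h1]
          exact le_of_mul_le_mul_right h1' hrpos
        have h3 : r ≤ 2 * ‖S D‖ / (n * α) := by
          rw [le_div_iff₀ (by positivity : (0:ℝ) < n * α)]
          have hnne : (n:ℝ) ≠ 0 := ne_of_gt hn0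
          have := mul_le_mul_of_nonneg_left h2 (by positivity : (0:ℝ) ≤ 2 * n)
          calc r * (n * α) = (2 * n) * (α / 2 * r) := by ring
            _ ≤ (2 * n) * ((1 / n : ℝ) * ‖S D‖) := this
            _ = 2 * ‖S D‖ := by field_simp
        calc r ^ 2 ≤ (2 * ‖S D‖ / (n * α)) ^ 2 := pow_le_pow_left₀ hr0 h3 2
          _ ≤ 40 * G / (n * α ^ 2) := by
              rw [div_pow, div_le_div_iff₀ (by positivity) (by positivity)]
              nlinarith [mul_le_mul_of_nonneg_left hB
                (show (0:ℝ) ≤ 4 * (n:ℝ) * α ^ 2 by positivity), hn0, sq_nonneg α]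
    show ‖wD D - wstar‖ ≤ Real.sqrt (40 * G / (n * α ^ 2))
    exact Real.le_sqrt_of_sq_le hsq
  -- put everything together
  have hchain : (5 : ENNReal) / 6
      ≤ ν {D | ‖wD D - wstar‖ ≤ Real.sqrt (40 * G / (n * α ^ 2))} + 1 / 10 := by
    calc (5 : ENNReal) / 6 ≤ ν A := hsc
      _ ≤ ν ((A ∩ Bcᶜ) ∪ Bc) := by
          refine measure_mono fun D hD => ?_
          by_cases h : D ∈ Bc
          · exact Or.inr h
          · exact Or.inl ⟨hD, h⟩
      _ ≤ ν (A ∩ Bcᶜ) + ν Bc := measure_union_le _ _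
      _ ≤ ν {D | ‖wD D - wstar‖ ≤ Real.sqrt (40 * G / (n * α ^ 2))} + 1 / 10 :=
          add_le_add (measure_mono hincl) hBcle
  have harith : (11 : ENNReal) / 15 + 1 / 10 = 5 / 6 := by
    rw [show (11:ENNReal)/15 = ENNReal.ofReal (11/15) by
          rw [ENNReal.ofReal_div_of_pos (by norm_num), ENNReal.ofReal_ofNat,
            ENNReal.ofReal_ofNat],
        show (1:ENNReal)/10 = ENNReal.ofReal (1/10) by
          rw [ENNReal.ofReal_div_of_pos (by norm_num), ENNReal.ofReal_one,
            ENNReal.ofReal_ofNat],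
        show (5:ENNReal)/6 = ENNReal.ofReal (5/6) by
          rw [ENNReal.ofReal_div_of_pos (by norm_num), ENNReal.ofReal_ofNat,
            ENNReal.ofReal_ofNat],
        ← ENNReal.ofReal_add (by norm_num) (by norm_num)]
    norm_num
  have hfin10 : (1 : ENNReal) / 10 ≠ ⊤ := by norm_num
  have h := harith ▸ hchain
  exact (ENNReal.add_le_add_iff_right hfin10).mp h
end

section
/- Let H be a real inner product space, W ⊆ H a convex set, α > 0, and f : H → ℝ a differentiable function that is α-strongly convex on W. If w* ∈ W and ŵ ∈ W satisfy f(ŵ) ≤ f(w*), then ‖ŵ − w*‖ ≤ (2/α) ‖∇f(w*)‖. -/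
open RealInnerProductSpace

/-- If a differentiable function `f` is `α`-strongly convex on a convex set `W`,
`w* ∈ W`, `ŵ ∈ W` and `f ŵ ≤ f w*`, then `‖ŵ − w*‖ ≤ (2/α) ‖∇f(w*)‖`. -/
theorem stmt_1
    {H : Type*} [NormedAddCommGroup H] [InnerProductSpace ℝ H] [CompleteSpace H]
    (W : Set H) (hW : Convex ℝ W)
    (α : ℝ) (hα : 0 < α)
    (f : H → ℝ) (f' : H → H)
    (hdiff : ∀ w, HasGradientAt f (f' w) w)
    (hsc : ∀ w ∈ W, ∀ w' ∈ W,
      f w + ⟪f' w, w' - w⟫ + α / 2 * ‖w' - w‖ ^ 2 ≤ f w')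
    (wstar : H) (hwstar : wstar ∈ W)
    (what : H) (hwhat : what ∈ W)
    (hle : f what ≤ f wstar) :
    ‖what - wstar‖ ≤ (2 / α) * ‖f' wstar‖ := by
  have h := hsc wstar hwstar what hwhat
  have h1 : α / 2 * ‖what - wstar‖ ^ 2 ≤ -⟪f' wstar, what - wstar⟫ := by linarith
  have h2 : -⟪f' wstar, what - wstar⟫ ≤ ‖f' wstar‖ * ‖what - wstar‖ := by
    have := abs_real_inner_le_norm (f' wstar) (what - wstar)
    have := neg_abs_le ⟪f' wstar, what - wstar⟫
    linarith
  rcases eq_or_lt_of_le (norm_nonneg (what - wstar)) with hn | hn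
  · rw [← hn]; positivity
  · rw [div_mul_eq_mul_div, le_div_iff₀ hα, mul_comm]
    nlinarith [sq_nonneg ‖what - wstar‖]
end

section
/- Let n, m ∈ ℕ with 2m < n, let x₁, …, xₙ ∈ ℝ, let μ ∈ ℝ and let t, s ≥ 0. Suppose |(1/n) Σᵢ₌₁ⁿ xᵢ − μ| ≤ t and |xᵢ − μ| ≤ s for every i. Let x₍₁₎ ≤ x₍₂₎ ≤ … ≤ x₍ₙ₎ be a nondecreasing rearrangement of x₁, …, xₙ, and define the m-trimmed mean Trimₘ := (x₍ₘ₊₁₎ + … + x₍ₙ₋ₘ₎)/(n − 2m), i.e., the average after discarding the m smallest and m largest values. Then |Trimₘ − μ| ≤ (n t + 2 m s)/(n − 2m). -/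
/-- Estimation error of the `m`-trimmed mean: if the full empirical mean is within `t`
of `μ` and every sample is within `s` of `μ`, then the `m`-trimmed mean (obtained from a
nondecreasing rearrangement `y` of `x` by averaging the values with indices in
`[m, n - m)`) is within `(n t + 2 m s)/(n − 2m)` of `μ`. -/
theorem stmt_3
    (n m : ℕ) (hmn : 2 * m < n)
    (x y : Fin n → ℝ) (σ : Equiv.Perm (Fin n))
    (hperm : ∀ i, y i = x (σ i))
    (hmono : Monotone y)
    (μ t s : ℝ) (ht : 0 ≤ t) (hs : 0 ≤ s)
    (hmean : |(1 / n : ℝ) * ∑ i, x i - μ| ≤ t)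
    (hdev : ∀ i, |x i - μ| ≤ s) :
    |(∑ i : Fin n, if m ≤ (i : ℕ) ∧ (i : ℕ) < n - m then y i else 0) / ((n : ℝ) - 2 * m) - μ|
      ≤ ((n : ℝ) * t + 2 * m * s) / ((n : ℝ) - 2 * m) := by
  have hn : 0 < n := lt_of_le_of_lt (Nat.zero_le _) hmn
  have hnR : (0:ℝ) < (n:ℝ) := by exact_mod_cast hn
  have hN : (0:ℝ) < (n:ℝ) - 2*m := by
    have : ((2*m : ℕ) : ℝ) < (n:ℝ) := by exact_mod_cast hmn
    push_cast at this; linarith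
  set P : Fin n → Prop := fun i => m ≤ (i:ℕ) ∧ (i:ℕ) < n - m with hP
  have hcardP : (Finset.univ.filter (fun i : Fin n => P i)).card = n - 2*m := by
    rw [Finset.card_filter]
    simp only [hP]
    rw [Fin.sum_univ_eq_sum_range (fun k => if m ≤ k ∧ k < n - m then 1 else 0)]
    rw [← Finset.card_filter]
    have : (Finset.range n).filter (fun k => m ≤ k ∧ k < n - m) = Finset.Ico m (n - m) := by
      ext k; simp [Finset.mem_Ico, Finset.mem_range]; omega
    rw [this, Nat.card_Ico]; omega
  have hcardQ : (Finset.univ.filter (fun i : Fin n => ¬ P i)).card = 2*m := by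
    rw [Finset.card_filter]
    simp only [hP]
    rw [Fin.sum_univ_eq_sum_range (fun k => if ¬ (m ≤ k ∧ k < n - m) then 1 else 0)]
    rw [← Finset.card_filter]
    have heq : (Finset.range n).filter (fun k => ¬ (m ≤ k ∧ k < n - m))
        = Finset.range m ∪ Finset.Ico (n - m) n := by
      ext k; simp [Finset.mem_Ico, Finset.mem_range]; omega
    rw [heq, Finset.card_union_of_disjoint]
    · rw [Finset.card_range, Nat.card_Ico]; omega
    · simp only [Finset.disjoint_left, Finset.mem_range, Finset.mem_Ico]
      intro a ha hb; omega
  have hsum_perm : ∑ i, y i = ∑ i, x i := by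
    simp only [hperm]; exact Equiv.sum_comp σ x
  set S : ℝ := ∑ i : Fin n, if P i then y i else 0 with hS
  -- sum over trimmed indices of (y i - μ)
  have hμsum : ∑ i : Fin n, (if P i then (μ:ℝ) else 0) = ((n:ℝ) - 2*m) * μ := by
    have h2m : 2*m ≤ n := le_of_lt hmn
    rw [← Finset.sum_filter, Finset.sum_const, hcardP, nsmul_eq_mul, Nat.cast_sub h2m]
    push_cast
    ring
  have h1 : ∑ i : Fin n, (if P i then (y i - μ) else 0) = S - ((n:ℝ) - 2*m) * μ := by
    rw [hS, ← hμsum, ← Finset.sum_sub_distrib]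
    apply Finset.sum_congr rfl
    intro i _
    split_ifs <;> ring
  have hsplit : ∑ i : Fin n, (if P i then (y i - μ) else 0)
      = (∑ i : Fin n, (y i - μ)) - ∑ i : Fin n, (if ¬ P i then (y i - μ) else 0) := by
    rw [eq_sub_iff_add_eq, ← Finset.sum_add_distrib]
    apply Finset.sum_congr rfl
    intro i _
    split_ifs <;> ring
  -- bound on full sum
  have hfull : |∑ i : Fin n, (y i - μ)| ≤ (n:ℝ) * t := by
    rw [Finset.sum_sub_distrib]
    simp only [Finset.sum_const, Finset.card_univ, Fintype.card_fin, nsmul_eq_mul,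
      hsum_perm]
    have : (∑ i, x i) - (n:ℝ) * μ = (n:ℝ) * ((1 / n : ℝ) * ∑ i, x i - μ) := by
      field_simp
    rw [this, abs_mul, abs_of_pos hnR]
    exact mul_le_mul_of_nonneg_left hmean (le_of_lt hnR)
  -- bound on discarded sum
  have hdisc : |∑ i : Fin n, (if ¬ P i then (y i - μ) else 0)| ≤ 2*(m:ℝ) * s := by
    calc |∑ i : Fin n, (if ¬ P i then (y i - μ) else 0)|
        ≤ ∑ i : Fin n, |if ¬ P i then (y i - μ) else 0| := Finset.abs_sum_le_sum_abs _ _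
      _ ≤ ∑ i : Fin n, (if ¬ P i then s else 0) := by
          apply Finset.sum_le_sum
          intro i _
          split_ifs with h
          · simp
          · rw [hperm i]; exact hdev (σ i)
      _ = 2*(m:ℝ) * s := by
          rw [← Finset.sum_filter, Finset.sum_const, hcardQ, nsmul_eq_mul]
          push_cast
          ring
  have hkey : |S - ((n:ℝ) - 2*m) * μ| ≤ (n:ℝ) * t + 2*(m:ℝ) * s := by
    rw [← h1, hsplit]
    calc |(∑ i : Fin n, (y i - μ)) - ∑ i : Fin n, (if ¬ P i then (y i - μ) else 0)|
        ≤ |∑ i : Fin n, (y i - μ)| + |∑ i : Fin n, (if ¬ P i then (y i - μ) else 0)| :=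
          abs_sub _ _
      _ ≤ (n:ℝ) * t + 2*(m:ℝ) * s := add_le_add hfull hdisc
  have : S / ((n:ℝ) - 2*m) - μ = (S - ((n:ℝ) - 2*m) * μ) / ((n:ℝ) - 2*m) := by
    field_simp
  rw [this, abs_div, abs_of_pos hN]
  gcongr
end

section
/- Let H be a real inner product space and let L : H → ℝ be differentiable, α-strongly convex on H and β-smooth on H, where 0 < α ≤ β. Let w* ∈ H satisfy ∇L(w*) = 0. Then for every w ∈ H, ‖w − (1/β)∇L(w) − w*‖² ≤ (1 − 2α/(α + β)) ‖w − w*‖². -/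
set_option maxHeartbeats 1000000


open RealInnerProductSpace

/-- One-step contraction of gradient descent with stepsize `1/β` for an
`α`-strongly convex and `β`-smooth differentiable function `L` with
stationary point `w*`. -/
theorem stmt_4
    {H : Type*} [NormedAddCommGroup H] [InnerProductSpace ℝ H] [CompleteSpace H]
    (L : H → ℝ) (L' : H → H)
    (hdiff : ∀ w, HasGradientAt L (L' w) w)
    (α β : ℝ) (hα : 0 < α) (hαβ : α ≤ β)
    (hsc : ∀ w w' : H, L w + ⟪L' w, w' - w⟫ + α / 2 * ‖w' - w‖ ^ 2 ≤ L w')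
    (hsmooth : ∀ w w' : H, L w' ≤ L w + ⟪L' w, w' - w⟫ + β / 2 * ‖w' - w‖ ^ 2)
    (wstar : H) (hws : L' wstar = 0) :
    ∀ w : H, ‖w - (1 / β) • L' w - wstar‖ ^ 2 ≤ (1 - 2 * α / (α + β)) * ‖w - wstar‖ ^ 2 := by
  intro w
  have hβ : 0 < β := lt_of_lt_of_le hα hαβ
  set g : H := L' w with hg
  set v : H := w - wstar with hv
  set G : ℝ := ‖g‖ ^ 2 with hG
  set V : ℝ := ‖v‖ ^ 2 with hV
  set I : ℝ := ⟪g, v⟫ with hI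
  set u : H := g - α • v with hu
  -- the basic two-point inequality
  have BI : ∀ z1 z2 : H, α / 2 * ‖z1 - wstar‖ ^ 2 + ⟪g, z2 - w⟫ + α / 2 * ‖z2 - w‖ ^ 2
      ≤ ⟪g, z1 - w⟫ + β / 2 * ‖z1 - w‖ ^ 2 + β / 2 * ‖z2 - wstar‖ ^ 2 := by
    intro z1 z2
    have h1 := hsc wstar z1
    have h2 := hsmooth w z1
    have h3 := hsc w z2
    have h4 := hsmooth wstar z2
    rw [hws] at h1 h4
    simp only [inner_zero_left] at h1 h4
    linarith
  have hgu : ⟪g, u⟫ = G - α * I := by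
    simp [hu, inner_sub_right, real_inner_smul_right, hG, hI,
      real_inner_self_eq_norm_sq]
  have hvu : ⟪v, u⟫ = I - α * V := by
    simp [hu, inner_sub_right, real_inner_smul_right, hV, hI,
      real_inner_self_eq_norm_sq, real_inner_comm v g]
  have huv : ⟪u, v⟫ = I - α * V := by rw [real_inner_comm]; exact hvu
  have hU : ‖u‖ ^ 2 = G - 2 * α * I + α ^ 2 * V := by
    rw [hu, norm_sub_sq_real, real_inner_smul_right, norm_smul]
    simp [hG, hV, hI, mul_pow, sq_abs, Real.norm_eq_abs]
    ring
  clear_value g v G V I u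
  have fam : ∀ t : ℝ, α * V - I + 2 * t * ‖u‖ ^ 2 ≤ (β - α) * t ^ 2 * ‖u‖ ^ 2 := by
    intro t
    have h := BI (w + (-t) • u) (wstar + t • u)
    have e1 : w + (-t) • u - wstar = v + (-t) • u := by rw [hv]; abel
    have e2 : w + (-t) • u - w = (-t) • u := by abel
    have e3 : wstar + t • u - w = t • u - v := by rw [hv]; abel
    have e4 : wstar + t • u - wstar = t • u := by abel
    rw [e1, e2, e3, e4] at h
    rw [norm_add_sq_real, norm_sub_sq_real, inner_sub_right] at h
    simp only [real_inner_smul_right, real_inner_smul_left, norm_smul,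
      Real.norm_eq_abs, mul_pow, sq_abs, abs_neg, neg_mul, hgu, huv, hvu, ← hI, ← hV] at h
    rw [hU] at h ⊢
    ring_nf at h ⊢
    linarith
  -- coercivity: (α+β) * I ≥ G + α*β*V
  have K : G + α * β * V ≤ (α + β) * I := by
    rcases eq_or_lt_of_le hαβ with heq | hlt
    · -- α = β : first show ‖u‖^2 ≤ 0
      have hU0 : ‖u‖ ^ 2 ≤ 0 := by
        by_contra hpos
        push_neg at hpos
        have h := fam ((I - α * V + 1) / (2 * ‖u‖ ^ 2))
        rw [← heq] at h
        have hmul : 2 * ((I - α * V + 1) / (2 * ‖u‖ ^ 2)) * ‖u‖ ^ 2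
            = I - α * V + 1 := by rw [show 2 * ((I - α * V + 1) / (2 * ‖u‖ ^ 2)) * ‖u‖ ^ 2 = (I - α * V + 1) / (2 * ‖u‖ ^ 2) * (2 * ‖u‖ ^ 2) by ring]; exact div_mul_cancel₀ _ (ne_of_gt (by linarith))
        nlinarith [hmul, h]
      have hU0' : ‖u‖ ^ 2 = 0 := le_antisymm hU0 (sq_nonneg _)
      rw [hU] at hU0'
      have h := fam 0
      rw [hU] at h
      nlinarith [hU0', h, heq]
    · have hba : 0 < β - α := sub_pos.mpr hlt
      have h := fam (1 / (β - α))
      rw [hU] at h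
      have h1 : (β - α) * (1 / (β - α)) ^ 2 = 1 / (β - α) := by
        field_simp
      rw [h1] at h
      have hne : β - α ≠ 0 := ne_of_gt hba
      have h3 : 1 / (β - α) * (G - 2 * α * I + α ^ 2 * V) ≤ I - α * V := by linarith
      have h4 := mul_le_mul_of_nonneg_left h3 (le_of_lt hba)
      rw [← mul_assoc, mul_one_div, div_self hne, one_mul] at h4
      nlinarith [h4]
  -- finish
  have e : w - (1 / β) • g - wstar = v - (1 / β) • g := by rw [hv]; abel
  rw [e, norm_sub_sq_real, real_inner_smul_right, norm_smul]
  simp only [Real.norm_eq_abs, mul_pow, sq_abs, real_inner_comm v g, ← hI, ← hV, ← hG]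
  have hs : 0 < α + β := by linarith
  have hG0 : (0:ℝ) ≤ G := hG ▸ sq_nonneg _
  have hK2 := mul_le_mul_of_nonneg_left K (show (0:ℝ) ≤ 2 * β by linarith)
  have h2 : (α + β) * G - 2 * β * (α + β) * I + 2 * α * β ^ 2 * V ≤ 0 := by
    nlinarith [hK2, mul_nonneg (sub_nonneg.mpr hαβ) hG0]
  have hiden : V - 2 * (1 / β * I) + (1 / β) ^ 2 * G - (1 - 2 * α / (α + β)) * V
      = ((α + β) * G - 2 * β * (α + β) * I + 2 * α * β ^ 2 * V) / (β ^ 2 * (α + β)) := by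
    field_simp
    ring
  have hq : ((α + β) * G - 2 * β * (α + β) * I + 2 * α * β ^ 2 * V) / (β ^ 2 * (α + β)) ≤ 0 :=
    div_nonpos_of_nonpos_of_nonneg h2 (by positivity)
  have hIc : ⟪v, g⟫ = I := by rw [real_inner_comm]; exact hI.symm
  rw [hIc]
  linarith [hiden, hq]
end

section
/- Let H be a real inner product space and let L : H → ℝ be differentiable, α-strongly convex on H and β-smooth on H, where 0 < α ≤ β. Let W ⊆ H, let w* ∈ W satisfy ∇L(w*) = 0, and let P : H → H be a map with P(x) ∈ W and ‖P(x) − u‖ ≤ ‖x − u‖ for every x ∈ H and every u ∈ W. Let e ≥ 0, and let sequences (wᵗ)ₜ≥₀ in W and (gᵗ)ₜ≥₀ in H satisfy wᵗ = P(wᵗ⁻¹ − (1/β) gᵗ⁻¹) and ‖gᵗ⁻¹ − ∇L(wᵗ⁻¹)‖ ≤ e for every t ≥ 1. Then for every T ≥ 0, ‖w^T − w*‖ ≤ (1 − α/(α + β))^T ‖w⁰ − w*‖ + (α + β) e / (α β). -/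
open RealInnerProductSpace

set_option maxHeartbeats 2000000 in
/-- Linear convergence of projected gradient descent with inexact gradients for an
`α`-strongly convex and `β`-smooth function: if `‖gᵗ − ∇L(wᵗ)‖ ≤ e` at every step, then
`‖w^T − w*‖ ≤ (1 − α/(α+β))^T ‖w⁰ − w*‖ + (α+β) e/(α β)`. -/
theorem stmt_5
    {H : Type*} [NormedAddCommGroup H] [InnerProductSpace ℝ H] [CompleteSpace H]
    (L : H → ℝ) (L' : H → H)
    (hdiff : ∀ w, HasGradientAt L (L' w) w)
    (α β : ℝ) (hα : 0 < α) (hαβ : α ≤ β)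
    (hsc : ∀ w w' : H, L w + ⟪L' w, w' - w⟫ + α / 2 * ‖w' - w‖ ^ 2 ≤ L w')
    (hsmooth : ∀ w w' : H, L w' ≤ L w + ⟪L' w, w' - w⟫ + β / 2 * ‖w' - w‖ ^ 2)
    (W : Set H) (wstar : H) (hwstar : wstar ∈ W) (hws : L' wstar = 0)
    (P : H → H)
    (hPmem : ∀ x : H, P x ∈ W)
    (hPdist : ∀ x : H, ∀ u ∈ W, ‖P x - u‖ ≤ ‖x - u‖)
    (e : ℝ) (he : 0 ≤ e)
    (w g : ℕ → H)
    (hwW : ∀ t, w t ∈ W)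
    (hupdate : ∀ t : ℕ, w (t + 1) = P (w t - (1 / β) • g t))
    (herr : ∀ t : ℕ, ‖g t - L' (w t)‖ ≤ e) :
    ∀ T : ℕ, ‖w T - wstar‖ ≤ (1 - α / (α + β)) ^ T * ‖w 0 - wstar‖ + (α + β) * e / (α * β) := by
  have hβ : 0 < β := lt_of_lt_of_le hα hαβ
  have hab : 0 < α + β := by linarith
  set ρ : ℝ := 1 - α / (α + β) with hρdef
  have hρ : ρ = β / (α + β) := by rw [hρdef]; field_simp; ring
  have hρ0 : 0 ≤ ρ := by rw [hρ]; positivity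
  -- Step A: key inner-product inequality
  have key : ∀ x : H, ‖L' x‖ ^ 2 + α * β * ‖x - wstar‖ ^ 2 ≤ (α + β) * ⟪L' x, x - wstar⟫ := by
    intro x
    have hu : ∀ A U d2 : ℝ, A = ⟪L' x - α • (x - wstar), x - wstar⟫ →
        U = ‖L' x - α • (x - wstar)‖ ^ 2 → d2 = ‖x - wstar‖ ^ 2 → True := fun _ _ _ _ _ _ => trivial
    set u : H := L' x - α • (x - wstar) with hudef
    set A : ℝ := ⟪u, x - wstar⟫ with hA
    set U : ℝ := ‖u‖ ^ 2 with hU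
    set d2 : ℝ := ‖x - wstar‖ ^ 2 with hd2
    clear_value A U d2
    clear_value u
    have master : ∀ t : ℝ, 2 * t * U ≤ A + (β - α) * t ^ 2 * U := by
      intro t
      have h1a := hsc x (wstar + t • u)
      have h1b := hsmooth wstar (wstar + t • u)
      have h2a := hsc wstar (x - t • u)
      have h2b := hsmooth x (x - t • u)
      rw [hws] at h1b h2a
      have d_i1 : ⟪L' x, (wstar + t • u) - x⟫ = -(A + α * d2) + t * (U + α * A) := by
        rw [hA, hU, hd2, hudef]
        simp only [← real_inner_self_eq_norm_sq, inner_sub_left, inner_sub_right,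
          inner_add_left, inner_add_right, real_inner_smul_left, real_inner_smul_right,
          real_inner_comm]
        ring
      have d_n1 : ‖(wstar + t • u) - x‖ ^ 2 = d2 - 2 * t * A + t ^ 2 * U := by
        rw [hA, hU, hd2, hudef]
        simp only [← real_inner_self_eq_norm_sq, inner_sub_left, inner_sub_right,
          inner_add_left, inner_add_right, real_inner_smul_left, real_inner_smul_right,
          real_inner_comm]
        ring
      have d_n2 : ‖(wstar + t • u) - wstar‖ ^ 2 = t ^ 2 * U := by
        rw [hU]
        simp only [← real_inner_self_eq_norm_sq, inner_sub_left, inner_sub_right,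
          inner_add_left, inner_add_right, real_inner_smul_left, real_inner_smul_right,
          real_inner_comm]
        ring
      have d_i2 : ⟪L' x, (x - t • u) - x⟫ = -(t * (U + α * A)) := by
        rw [hA, hU, hudef]
        simp only [← real_inner_self_eq_norm_sq, inner_sub_left, inner_sub_right,
          inner_add_left, inner_add_right, real_inner_smul_left, real_inner_smul_right,
          real_inner_comm]
        ring
      have d_n3 : ‖(x - t • u) - wstar‖ ^ 2 = d2 - 2 * t * A + t ^ 2 * U := by
        rw [hA, hU, hd2, hudef]
        simp only [← real_inner_self_eq_norm_sq, inner_sub_left, inner_sub_right,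
          inner_add_left, inner_add_right, real_inner_smul_left, real_inner_smul_right,
          real_inner_comm]
        ring
      have d_n4 : ‖(x - t • u) - x‖ ^ 2 = t ^ 2 * U := by
        rw [hU]
        simp only [← real_inner_self_eq_norm_sq, inner_sub_left, inner_sub_right,
          inner_add_left, inner_add_right, real_inner_smul_left, real_inner_smul_right,
          real_inner_comm]
        ring
      rw [d_i1, d_n1] at h1a
      rw [d_n2] at h1b
      simp only [inner_zero_left] at h1b h2a
      rw [d_n3] at h2a
      rw [d_i2, d_n4] at h2b
      nlinarith [h1a, h1b, h2a, h2b]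
    have hA0 : 0 ≤ A := by have := master 0; nlinarith [this]
    have hUle : U ≤ (β - α) * A := by
      rcases lt_or_eq_of_le hαβ with hlt | heq
      · have hγ : 0 < β - α := by linarith
        have hm := master (1 / (β - α))
        have h2 : (β - α) * (2 * (1 / (β - α)) * U - (β - α) * (1 / (β - α)) ^ 2 * U) ≤
            (β - α) * A := by
          apply mul_le_mul_of_nonneg_left _ hγ.le
          linarith [hm]
        have h3 : (β - α) * (2 * (1 / (β - α)) * U - (β - α) * (1 / (β - α)) ^ 2 * U) = U := by
          field_simp; ring
        linarith
      · have hβα : β - α = 0 := by rw [heq]; ring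
        rw [hβα]
        by_contra hc
        push_neg at hc
        have hUpos : 0 < U := by nlinarith
        have hm := master ((A + 1) / (2 * U))
        rw [hβα] at hm
        have : 2 * ((A + 1) / (2 * U)) * U = A + 1 := by field_simp
        nlinarith [hm, this]
    have e1 : ⟪L' x, x - wstar⟫ = A + α * d2 := by
      rw [hA, hd2, hudef]
      simp only [← real_inner_self_eq_norm_sq, inner_sub_left, inner_sub_right,
        real_inner_smul_left, real_inner_smul_right, real_inner_comm]
      ring
    have e3 : ‖L' x‖ ^ 2 = U + 2 * α * A + α ^ 2 * d2 := by
      rw [hA, hU, hd2, hudef]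
      simp only [← real_inner_self_eq_norm_sq, inner_sub_left, inner_sub_right,
        real_inner_smul_left, real_inner_smul_right, real_inner_comm]
      ring
    rw [e1, e3]
    nlinarith [hUle]
  -- Step B: contraction of exact gradient step
  have contract : ∀ x : H, ‖x - (1 / β) • L' x - wstar‖ ≤ ρ * ‖x - wstar‖ := by
    intro x
    have hexp : ‖x - (1 / β) • L' x - wstar‖ ^ 2 =
        ‖x - wstar‖ ^ 2 - 2 * (1 / β) * ⟪L' x, x - wstar⟫ + (1 / β) ^ 2 * ‖L' x‖ ^ 2 := by
      simp only [← real_inner_self_eq_norm_sq, inner_sub_left, inner_sub_right,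
        real_inner_smul_left, real_inner_smul_right, real_inner_comm]
      ring
    have hk := key x
    have hG : 0 ≤ ‖L' x‖ ^ 2 := by positivity
    have hd : 0 ≤ ‖x - wstar‖ ^ 2 := by positivity
    have hsq : ‖x - (1 / β) • L' x - wstar‖ ^ 2 ≤ (ρ * ‖x - wstar‖) ^ 2 := by
      have hkk : β ^ 2 * (α + β) ^ 2 *
          (‖x - wstar‖ ^ 2 - 2 * (1 / β) * ⟪L' x, x - wstar⟫ + (1 / β) ^ 2 * ‖L' x‖ ^ 2) ≤
          β ^ 2 * (α + β) ^ 2 * ((ρ * ‖x - wstar‖) ^ 2) := by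
        have er : (ρ * ‖x - wstar‖) ^ 2 = β ^ 2 / (α + β) ^ 2 * ‖x - wstar‖ ^ 2 := by
          rw [hρ]; field_simp
        have e1 : β ^ 2 * (α + β) ^ 2 *
            (‖x - wstar‖ ^ 2 - 2 * (1 / β) * ⟪L' x, x - wstar⟫ + (1 / β) ^ 2 * ‖L' x‖ ^ 2) =
            β ^ 2 * (α + β) ^ 2 * ‖x - wstar‖ ^ 2 - 2 * β * (α + β) ^ 2 * ⟪L' x, x - wstar⟫ +
            (α + β) ^ 2 * ‖L' x‖ ^ 2 := by
          field_simp
        have e2 : β ^ 2 * (α + β) ^ 2 * (β ^ 2 / (α + β) ^ 2 * ‖x - wstar‖ ^ 2) =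
            β ^ 4 * ‖x - wstar‖ ^ 2 := by
          field_simp
        rw [er, e1, e2]
        nlinarith [mul_le_mul_of_nonneg_left hk (by positivity : (0:ℝ) ≤ 2 * β * (α + β)),
          mul_nonneg (mul_nonneg (sq_nonneg α) (sq_nonneg β)) hd,
          mul_nonneg (mul_nonneg (by linarith : (0:ℝ) ≤ β - α) hab.le) hG]
      rw [hexp]
      exact le_of_mul_le_mul_left hkk (by positivity)
    calc ‖x - (1 / β) • L' x - wstar‖
        = Real.sqrt (‖x - (1 / β) • L' x - wstar‖ ^ 2) := (Real.sqrt_sq (norm_nonneg _)).symm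
      _ ≤ Real.sqrt ((ρ * ‖x - wstar‖) ^ 2) := Real.sqrt_le_sqrt hsq
      _ = ρ * ‖x - wstar‖ := Real.sqrt_sq (mul_nonneg hρ0 (norm_nonneg _))
  -- Step C: one-step bound with inexact gradient
  have step : ∀ t : ℕ, ‖w (t + 1) - wstar‖ ≤ ρ * ‖w t - wstar‖ + e / β := by
    intro t
    rw [hupdate t]
    have h1 : ‖P (w t - (1 / β) • g t) - wstar‖ ≤ ‖w t - (1 / β) • g t - wstar‖ :=
      hPdist _ wstar hwstar
    have hdecomp : w t - (1 / β) • g t - wstar =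
        (w t - (1 / β) • L' (w t) - wstar) + (1 / β) • (L' (w t) - g t) := by
      rw [smul_sub]; abel
    have h2 : ‖w t - (1 / β) • g t - wstar‖ ≤
        ‖w t - (1 / β) • L' (w t) - wstar‖ + ‖(1 / β) • (L' (w t) - g t)‖ := by
      rw [hdecomp]; exact norm_add_le _ _
    have h3 : ‖(1 / β) • (L' (w t) - g t)‖ ≤ e / β := by
      have hrev : ‖L' (w t) - g t‖ ≤ e := by rw [norm_sub_rev]; exact herr t
      rw [norm_smul, Real.norm_eq_abs, abs_of_pos (by positivity : (0:ℝ) < 1 / β)]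
      calc 1 / β * ‖L' (w t) - g t‖ ≤ 1 / β * e :=
            mul_le_mul_of_nonneg_left hrev (by positivity)
        _ = e / β := by ring
    have h4 := contract (w t)
    linarith
  -- Step D: induction
  intro T
  induction T with
  | zero =>
    simp only [pow_zero, one_mul]
    have : 0 ≤ (α + β) * e / (α * β) := by positivity
    linarith
  | succ T ih =>
    have hs := step T
    have hmul : ρ * ‖w T - wstar‖ ≤ ρ * (ρ ^ T * ‖w 0 - wstar‖ + (α + β) * e / (α * β)) :=
      mul_le_mul_of_nonneg_left ih hρ0
    have hC : ρ * ((α + β) * e / (α * β)) + e / β = (α + β) * e / (α * β) := by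
      rw [hρ]; field_simp; ring
    calc ‖w (T + 1) - wstar‖ ≤ ρ * ‖w T - wstar‖ + e / β := hs
      _ ≤ ρ * (ρ ^ T * ‖w 0 - wstar‖ + (α + β) * e / (α * β)) + e / β := by linarith
      _ = ρ ^ (T + 1) * ‖w 0 - wstar‖ + (ρ * ((α + β) * e / (α * β)) + e / β) := by ring
      _ = ρ ^ (T + 1) * ‖w 0 - wstar‖ + (α + β) * e / (α * β) := by rw [hC]
end

section
/- Let H be a real inner product space and let L : H → ℝ be differentiable, convex, and β-smooth on H with β > 0. Let w* ∈ H satisfy ∇L(w*) = 0. Then for every w ∈ H, ‖w − (1/β)∇L(w) − w*‖ ≤ ‖w − w*‖. -/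
open RealInnerProductSpace

/-- A gradient step of size `1/β` on a convex `β`-smooth function does not increase the
distance to a stationary point `w*`. -/
theorem stmt_6
    {H : Type*} [NormedAddCommGroup H] [InnerProductSpace ℝ H] [CompleteSpace H]
    (L : H → ℝ) (L' : H → H)
    (hdiff : ∀ w, HasGradientAt L (L' w) w)
    (hconv : ∀ w w' : H, L w + ⟪L' w, w' - w⟫ ≤ L w')
    (β : ℝ) (hβ : 0 < β)
    (hsmooth : ∀ w w' : H, L w' ≤ L w + ⟪L' w, w' - w⟫ + β / 2 * ‖w' - w‖ ^ 2)
    (wstar : H) (hws : L' wstar = 0) :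
    ∀ w : H, ‖w - (1 / β) • L' w - wstar‖ ≤ ‖w - wstar‖ := by
  intro w
  set g := L' w with hg
  set v := w - (1 / β) • g with hv
  -- smoothness at the gradient step point
  have hs := hsmooth w v
  have hvw : v - w = -((1 / β) • g) := by rw [hv]; abel
  have hinner : ⟪g, v - w⟫ = -(1 / β * ‖g‖ ^ 2) := by
    rw [hvw, inner_neg_right, real_inner_smul_right, real_inner_self_eq_norm_sq]
  have hnorm : ‖v - w‖ ^ 2 = (1 / β) ^ 2 * ‖g‖ ^ 2 := by
    rw [hvw, norm_neg, norm_smul, mul_pow, Real.norm_eq_abs, sq_abs]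
  -- L w* ≤ L v  (w* is a global minimum)
  have hmin : L wstar ≤ L v := by
    have := hconv wstar v
    rw [hws] at this
    simpa using this
  -- convexity at w toward w*
  have hc := hconv w wstar
  -- key: ‖g‖² ≤ 2β⟪g, w - w*⟫
  have hb : β * (1 / β) = 1 := mul_one_div_cancel (ne_of_gt hβ)
  have hkey : ‖g‖ ^ 2 ≤ 2 * β * ⟪g, w - wstar⟫ := by
    rw [← hg] at hs hc
    rw [hinner, hnorm] at hs
    have h1 : ⟪g, wstar - w⟫ = -⟪g, w - wstar⟫ := by
      rw [← inner_neg_right]; congr 1; abel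
    rw [h1] at hc
    have hchain : 1 / β * ‖g‖ ^ 2 - β / 2 * ((1 / β) ^ 2 * ‖g‖ ^ 2) ≤ ⟪g, w - wstar⟫ := by
      linarith [hmin, hs, hc]
    have h2 := mul_le_mul_of_nonneg_left hchain (by positivity : (0:ℝ) ≤ 2 * β)
    have h3 : 2 * β * (1 / β * ‖g‖ ^ 2 - β / 2 * ((1 / β) ^ 2 * ‖g‖ ^ 2)) = ‖g‖ ^ 2 := by
      field_simp; ring
    linarith [h2, h3.symm.le, h3.le]
  -- expand the squared norm
  have hexp : ‖w - (1 / β) • g - wstar‖ ^ 2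
      = ‖w - wstar‖ ^ 2 - 2 * (1 / β) * ⟪g, w - wstar⟫ + (1 / β) ^ 2 * ‖g‖ ^ 2 := by
    have : w - (1 / β) • g - wstar = (w - wstar) - (1 / β) • g := by abel
    rw [this, norm_sub_sq_real, real_inner_smul_right, norm_smul, mul_pow,
      Real.norm_eq_abs, sq_abs, real_inner_comm]
    ring
  have hsq : ‖w - (1 / β) • g - wstar‖ ^ 2 ≤ ‖w - wstar‖ ^ 2 := by
    rw [hexp]
    nlinarith [mul_le_mul_of_nonneg_left hkey (sq_nonneg (1 / β)), hb]
  exact (pow_le_pow_iff_left₀ (norm_nonneg _) (norm_nonneg _) two_ne_zero).mp hsq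
end

section
/- Let H be a real inner product space and let L : H → ℝ be differentiable and convex, with a global minimizer w* (L(w*) ≤ L(w) for all w ∈ H). Let β, χ, D₀ > 0 and let T ≥ 1 be an integer with T ≥ β D₀ / χ. Let w⁰, w¹, …, w^T ∈ H satisfy ‖wᵗ − w*‖ ≤ 2 D₀ for all t ∈ {0, …, T}, and L(wᵗ) ≤ L(wᵗ⁻¹) − (1/(2β)) ‖∇L(wᵗ⁻¹)‖² + χ²/(2β) for all t ∈ {1, …, T}. Then there exists t ∈ {0, …, T} such that L(wᵗ) − L(w*) ≤ 16 D₀ χ. -/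
open RealInnerProductSpace

/-- Key lemma for inexact-gradient descent on a convex smooth objective: if the iterates
stay within distance `2 D₀` of a global minimizer and satisfy the approximate descent
inequality, and `T ≥ β D₀ / χ`, then some iterate has excess risk at most `16 D₀ χ`. -/
theorem stmt_8
    {H : Type*} [NormedAddCommGroup H] [InnerProductSpace ℝ H] [CompleteSpace H]
    (L : H → ℝ) (L' : H → H)
    (hdiff : ∀ w, HasGradientAt L (L' w) w)
    (hconv : ∀ w w' : H, L w + ⟪L' w, w' - w⟫ ≤ L w')
    (wstar : H) (hmin : ∀ w : H, L wstar ≤ L w)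
    (β χ D0 : ℝ) (hβ : 0 < β) (hχ : 0 < χ) (hD0 : 0 < D0)
    (T : ℕ) (hT1 : 1 ≤ T) (hT : β * D0 / χ ≤ (T : ℝ))
    (w : ℕ → H)
    (hbound : ∀ t ≤ T, ‖w t - wstar‖ ≤ 2 * D0)
    (hdescent : ∀ t < T,
      L (w (t + 1)) ≤ L (w t) - 1 / (2 * β) * ‖L' (w t)‖ ^ 2 + χ ^ 2 / (2 * β)) :
    ∃ t ≤ T, L (w t) - L wstar ≤ 16 * D0 * χ := by
  by_contra hcon
  push_neg at hcon
  have hepos : ∀ t ≤ T, 0 < L (w t) - L wstar := fun t ht =>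
    lt_trans (by positivity) (hcon t ht)
  -- Fact A
  have hA : ∀ t ≤ T, L (w t) - L wstar ≤ 2 * D0 * ‖L' (w t)‖ := by
    intro t ht
    have h1 := hconv (w t) wstar
    have h2 : |⟪L' (w t), wstar - w t⟫| ≤ ‖L' (w t)‖ * ‖wstar - w t‖ :=
      abs_real_inner_le_norm _ _
    have h2' := neg_abs_le (⟪L' (w t), wstar - w t⟫)
    have h3 : ‖wstar - w t‖ ≤ 2 * D0 := by
      rw [norm_sub_rev]; exact hbound t ht
    have h4 : (0:ℝ) ≤ ‖L' (w t)‖ := norm_nonneg _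
    have h5 : ‖L' (w t)‖ * ‖wstar - w t‖ ≤ ‖L' (w t)‖ * (2 * D0) :=
      mul_le_mul_of_nonneg_left h3 h4
    nlinarith
  -- Fact B
  have hB : ∀ t ≤ T, 8 * χ < ‖L' (w t)‖ := by
    intro t ht
    have h1 := hcon t ht
    have h2 := hA t ht
    nlinarith
  -- Fact C
  have hC : ∀ t < T, L (w (t + 1)) - L wstar ≤
      (L (w t) - L wstar) - 63 / (128 * β) * ‖L' (w t)‖ ^ 2 := by
    intro t ht
    have h1 := hdescent t ht
    have h2 := hB t (le_of_lt ht)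
    have hχ2 : χ ^ 2 ≤ ‖L' (w t)‖ ^ 2 / 64 := by nlinarith
    have h3 : χ ^ 2 / (2 * β) ≤ ‖L' (w t)‖ ^ 2 / 64 / (2 * β) := by gcongr
    have h4 : (1 / (2 * β)) * ‖L' (w t)‖ ^ 2 - ‖L' (w t)‖ ^ 2 / 64 / (2 * β)
        = 63 / (128 * β) * ‖L' (w t)‖ ^ 2 := by field_simp; ring
    linarith
  -- Fact D
  have hD : ∀ t < T, L (w (t + 1)) - L wstar ≤ 128 * β * D0 ^ 2 / 63 := by
    intro t ht
    have h1 := hC t ht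
    have h2 := hA t (le_of_lt ht)
    have key : 128 * β * D0 ^ 2 / 63
        - (2 * D0 * ‖L' (w t)‖ - 63 / (128 * β) * ‖L' (w t)‖ ^ 2)
        = (63 * ‖L' (w t)‖ - 128 * β * D0) ^ 2 / (8064 * β) := by
      field_simp
      ring
    have hkey : 0 ≤ (63 * ‖L' (w t)‖ - 128 * β * D0) ^ 2 / (8064 * β) := by positivity
    linarith
  -- Fact E
  have hE : ∀ t < T, 1 / (L (w t) - L wstar) + 63 / (512 * β * D0 ^ 2)
      ≤ 1 / (L (w (t + 1)) - L wstar) := by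
    intro t ht
    have ha : 0 < L (w t) - L wstar := hepos t (le_of_lt ht)
    have hb : 0 < L (w (t + 1)) - L wstar := hepos (t + 1) ht
    have hg2 : (L (w t) - L wstar) ^ 2 ≤ 4 * D0 ^ 2 * ‖L' (w t)‖ ^ 2 := by
      have h2 := hA t (le_of_lt ht)
      nlinarith [norm_nonneg (L' (w t))]
    have h2 : 63 / (512 * β * D0 ^ 2) * (L (w t) - L wstar) ^ 2
        ≤ 63 / (128 * β) * ‖L' (w t)‖ ^ 2 := by
      rw [div_mul_eq_mul_div, div_mul_eq_mul_div,
        div_le_div_iff₀ (by positivity) (by positivity)]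
      nlinarith [mul_le_mul_of_nonneg_left hg2 (show (0:ℝ) ≤ 8064 * β by positivity)]
    have hrec : L (w (t + 1)) - L wstar ≤ (L (w t) - L wstar)
        - 63 / (512 * β * D0 ^ 2) * (L (w t) - L wstar) ^ 2 := by
      have h1 := hC t ht
      linarith
    have hcpos : (0:ℝ) < 63 / (512 * β * D0 ^ 2) := by positivity
    have hba : L (w (t + 1)) - L wstar ≤ L (w t) - L wstar := by nlinarith
    rw [← sub_nonneg]
    have heq : 1 / (L (w (t + 1)) - L wstar)
        - (1 / (L (w t) - L wstar) + 63 / (512 * β * D0 ^ 2)) =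
        ((L (w t) - L wstar) - (L (w (t + 1)) - L wstar)
          - 63 / (512 * β * D0 ^ 2) * ((L (w t) - L wstar) * (L (w (t + 1)) - L wstar)))
          / ((L (w t) - L wstar) * (L (w (t + 1)) - L wstar)) := by
      field_simp
      ring
    rw [heq]
    apply div_nonneg _ (by positivity)
    nlinarith [mul_le_mul_of_nonneg_left hba (le_of_lt (mul_pos hcpos ha))]
  -- Fact F: induction
  have hF : ∀ t, 1 ≤ t → t ≤ T →
      63 / (128 * β * D0 ^ 2) + ((t : ℝ) - 1) * (63 / (512 * β * D0 ^ 2))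
        ≤ 1 / (L (w t) - L wstar) := by
    intro t ht
    induction t, ht using Nat.le_induction with
    | base =>
      intro h1T
      have hd := hD 0 (by omega)
      have he1 : 0 < L (w 1) - L wstar := hepos 1 h1T
      have h6 : 1 / (128 * β * D0 ^ 2 / 63) ≤ 1 / (L (w 1) - L wstar) :=
        one_div_le_one_div_of_le he1 hd
      have heqq : 1 / (128 * β * D0 ^ 2 / 63) = 63 / (128 * β * D0 ^ 2) := by
        field_simp
      rw [heqq] at h6
      push_cast
      linarith
    | succ t ht ih =>
      intro htT
      have h1 : t ≤ T := by omega
      have h2 : t < T := by omega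
      have ihh := ih h1
      have hrec := hE t h2
      push_cast
      push_cast at ihh
      linarith
  -- conclude
  have hFT := hF T hT1 le_rfl
  have heT : 0 < L (w T) - L wstar := hepos T le_rfl
  have hcT := hcon T le_rfl
  have hlt : 1 / (L (w T) - L wstar) < 1 / (16 * D0 * χ) := by
    apply one_div_lt_one_div_of_lt (by positivity)
    exact hcT
  have hβD0 : β * D0 ≤ (T : ℝ) * χ := by
    rw [div_le_iff₀ hχ] at hT
    linarith
  have hcontra : 1 / (16 * D0 * χ) ≤
      63 / (128 * β * D0 ^ 2) + ((T : ℝ) - 1) * (63 / (512 * β * D0 ^ 2)) := by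
    have hS1 : (1:ℝ) ≤ (T : ℝ) := by exact_mod_cast hT1
    rw [← sub_nonneg]
    have heq2 : 63 / (128 * β * D0 ^ 2) + ((T : ℝ) - 1) * (63 / (512 * β * D0 ^ 2))
        - 1 / (16 * D0 * χ) =
        (63 * ((T : ℝ) + 3) * χ * D0 - 32 * β * D0 ^ 2)
          / (512 * β * D0 ^ 3 * χ) := by
      field_simp
      ring
    rw [heq2]
    apply div_nonneg _ (by positivity)
    nlinarith
  linarith
end

section
/- Let H be a real inner product space and let L : H → ℝ be differentiable and convex, with a global minimizer w* (L(w*) ≤ L(w) for all w ∈ H). Let β, χ, D₀ > 0, let T ≥ 1 be an integer, and let w⁰, w¹, …, w^T ∈ H satisfy ‖wᵗ − w*‖ ≤ 2 D₀ for all t ∈ {0, …, T}, and L(wᵗ) ≤ L(wᵗ⁻¹) − (1/(2β)) ‖∇L(wᵗ⁻¹)‖² + χ²/(2β) for all t ∈ {1, …, T}. If for some t₀ ∈ {0, …, T} one has L(w^{t₀}) − L(w*) ≤ 16 D₀ χ, then for every t with t₀ ≤ t ≤ T, L(wᵗ) − L(w*) ≤ 16 D₀ χ + χ²/(2β). -/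
open RealInnerProductSpace

/-- Once the excess risk of an inexact-gradient descent trajectory drops below `16 D₀ χ`,
it never again exceeds `16 D₀ χ + χ²/(2β)`. -/
theorem stmt_9
    {H : Type*} [NormedAddCommGroup H] [InnerProductSpace ℝ H] [CompleteSpace H]
    (L : H → ℝ) (L' : H → H)
    (hdiff : ∀ w, HasGradientAt L (L' w) w)
    (hconv : ∀ w w' : H, L w + ⟪L' w, w' - w⟫ ≤ L w')
    (wstar : H) (hmin : ∀ w : H, L wstar ≤ L w)
    (β χ D0 : ℝ) (hβ : 0 < β) (hχ : 0 < χ) (hD0 : 0 < D0)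
    (T : ℕ) (hT1 : 1 ≤ T)
    (w : ℕ → H)
    (hbound : ∀ t ≤ T, ‖w t - wstar‖ ≤ 2 * D0)
    (hdescent : ∀ t < T,
      L (w (t + 1)) ≤ L (w t) - 1 / (2 * β) * ‖L' (w t)‖ ^ 2 + χ ^ 2 / (2 * β))
    (t₀ : ℕ) (ht₀ : t₀ ≤ T)
    (hstart : L (w t₀) - L wstar ≤ 16 * D0 * χ) :
    ∀ t, t₀ ≤ t → t ≤ T → L (w t) - L wstar ≤ 16 * D0 * χ + χ ^ 2 / (2 * β) := by
  intro t ht htT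
  induction t, ht using Nat.le_induction with
  | base =>
    have h1 : 0 ≤ χ ^ 2 / (2 * β) := by positivity
    linarith
  | succ n hn ih =>
    have hnT : n ≤ T := Nat.le_of_succ_le htT
    have hdn := hdescent n (Nat.lt_of_succ_le htT)
    by_cases hc : L (w n) - L wstar ≤ 16 * D0 * χ
    · have h1 : 0 ≤ 1 / (2 * β) * ‖L' (w n)‖ ^ 2 := by positivity
      linarith
    · push_neg at hc
      have hconv' := hconv (w n) wstar
      have hip : ⟪L' (w n), wstar - w n⟫ = -⟪L' (w n), w n - wstar⟫ := by
        rw [← inner_neg_right, neg_sub]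
      have h2 : L (w n) - L wstar ≤ ⟪L' (w n), w n - wstar⟫ := by
        rw [hip] at hconv'; linarith
      have h3 : ⟪L' (w n), w n - wstar⟫ ≤ ‖L' (w n)‖ * ‖w n - wstar‖ :=
        real_inner_le_norm _ _
      have h4 : ‖w n - wstar‖ ≤ 2 * D0 := hbound n hnT
      have hg : χ ≤ ‖L' (w n)‖ := by
        by_contra hcon
        push_neg at hcon
        have : ‖L' (w n)‖ * ‖w n - wstar‖ ≤ ‖L' (w n)‖ * (2 * D0) :=
          mul_le_mul_of_nonneg_left h4 (norm_nonneg _)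
        nlinarith
      have hg2 : χ ^ 2 ≤ ‖L' (w n)‖ ^ 2 := by nlinarith [hχ.le]
      have h5 : χ ^ 2 / (2 * β) ≤ 1 / (2 * β) * ‖L' (w n)‖ ^ 2 := by
        rw [div_eq_mul_inv, one_div, mul_comm (χ ^ 2)]
        exact mul_le_mul_of_nonneg_left hg2 (by positivity)
      have := ih hnT
      linarith
end

section
/- Let a ∈ ℝ and b > 0, and let Y be a standard Gaussian random variable (mean 0, variance 1). Define V₋ = (√2 − a)/b, V₊ = (√2 + a)/b, F₋ = Φ(−V₋), F₊ = Φ(−V₊), E₋ = exp(−V₋²/2), E₊ = exp(−V₊²/2), where Φ is the cumulative distribution function of the standard Gaussian. Define T₁ = (2√2/3)(F₋ − F₊), T₂ = −(a − a³/6)(F₋ + F₊), T₃ = (b/√(2π))(1 − a²/2)(E₊ − E₋), T₄ = (a b²/2)(F₊ + F₋ + (1/√(2π))(V₊E₊ + V₋E₋)), T₅ = (b³/(6√(2π)))((2 + V₋²)E₋ − (2 + V₊²)E₊), and C(a,b) = T₁ + T₂ + T₃ + T₄ + T₅. Then E[φ(a + bY)] = a(1 − b²/2) − a³/6 + C(a,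 b). -/
open MeasureTheory ProbabilityTheory

/-- The Catoni truncation function: `φ(x) = x − x³/6` on `[−√2, √2]`, and `±2√2/3` outside. -/
noncomputable def catoniPhi (x : ℝ) : ℝ :=
  if x < -Real.sqrt 2 then -(2 * Real.sqrt 2 / 3)
  else if x ≤ Real.sqrt 2 then x - x ^ 3 / 6
  else 2 * Real.sqrt 2 / 3

/-- The cumulative distribution function of the standard Gaussian distribution. -/
noncomputable def stdGaussCDF (x : ℝ) : ℝ :=
  ((gaussianReal 0 1) (Set.Iic x)).toReal

/-- The correction term `C(a, b) = T₁ + T₂ + T₃ + T₄ + T₅`. -/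
noncomputable def catoniCorrection (a b : ℝ) : ℝ :=
  let Vm := (Real.sqrt 2 - a) / b
  let Vp := (Real.sqrt 2 + a) / b
  let Fm := stdGaussCDF (-Vm)
  let Fp := stdGaussCDF (-Vp)
  let Em := Real.exp (-Vm ^ 2 / 2)
  let Ep := Real.exp (-Vp ^ 2 / 2)
  2 * Real.sqrt 2 / 3 * (Fm - Fp)
    + -(a - a ^ 3 / 6) * (Fm + Fp)
    + b / Real.sqrt (2 * Real.pi) * (1 - a ^ 2 / 2) * (Ep - Em)
    + a * b ^ 2 / 2 * (Fp + Fm + 1 / Real.sqrt (2 * Real.pi) * (Vp * Ep + Vm * Em))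
    + b ^ 3 / (6 * Real.sqrt (2 * Real.pi)) * ((2 + Vm ^ 2) * Em - (2 + Vp ^ 2) * Ep)

noncomputable def stdP (x : ℝ) : ℝ := (Real.sqrt (2*Real.pi))⁻¹ * Real.exp (-x^2/2)

lemma stdP_eq : gaussianPDFReal 0 1 = stdP := by
  ext x; simp [gaussianPDFReal, stdP]

lemma stdP_nonneg (x : ℝ) : 0 ≤ stdP x := by unfold stdP; positivity

lemma stdP_integrable : Integrable stdP := stdP_eq ▸ integrable_gaussianPDFReal 0 1

lemma stdP_total : ∫ x, stdP x = 1 := stdP_eq ▸ integral_gaussianPDFReal_eq_one 0 one_ne_zero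

lemma stdP_cdf (t : ℝ) : ∫ x in Set.Iic t, stdP x = stdGaussCDF t := by
  rw [stdGaussCDF, gaussianReal_apply_eq_integral 0 one_ne_zero, stdP_eq,
    ENNReal.toReal_ofReal (setIntegral_nonneg measurableSet_Iic fun x _ => stdP_nonneg x)]

lemma stdP_tail (t : ℝ) : ∫ x in Set.Ioi t, stdP x = stdGaussCDF (-t) := by
  rw [← stdP_cdf, ← integral_comp_neg_Ioi]
  refine integral_congr_ae (Filter.Eventually.of_forall fun x => ?_)
  simp [stdP, neg_sq]

lemma stdGaussCDF_symm (t : ℝ) : stdGaussCDF t = 1 - stdGaussCDF (-t) := by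
  have h := intervalIntegral.integral_Iic_add_Ioi (b := t)
    stdP_integrable.integrableOn stdP_integrable.integrableOn
  rw [stdP_total, stdP_cdf, stdP_tail] at h
  linarith

lemma stdP_interval (c d : ℝ) :
    ∫ x in c..d, stdP x = stdGaussCDF d - stdGaussCDF c := by
  rw [← intervalIntegral.integral_Iic_sub_Iic stdP_integrable.integrableOn
    stdP_integrable.integrableOn, stdP_cdf, stdP_cdf]

lemma sqrt2_cube : Real.sqrt 2 ^ 3 = 2 * Real.sqrt 2 := by
  rw [pow_succ, Real.sq_sqrt (by norm_num : (0:ℝ) ≤ 2)]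

lemma catoni_mid {y : ℝ} (h1 : -Real.sqrt 2 ≤ y) (h2 : y ≤ Real.sqrt 2) :
    catoniPhi y = y - y ^ 3 / 6 := by
  rw [catoniPhi, if_neg (not_lt.2 h1), if_pos h2]

lemma catoni_left {y : ℝ} (h : y ≤ -Real.sqrt 2) : catoniPhi y = -(2 * Real.sqrt 2 / 3) := by
  rcases lt_or_eq_of_le h with h' | h'
  · rw [catoniPhi, if_pos h']
  · subst h'
    rw [catoni_mid le_rfl (by nlinarith [Real.sqrt_nonneg 2])]
    linear_combination sqrt2_cube / 6
lemma catoni_right {y : ℝ} (h : Real.sqrt 2 ≤ y) : catoniPhi y = 2 * Real.sqrt 2 / 3 := by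
  rcases lt_or_eq_of_le h with h' | h'
  · rw [catoniPhi, if_neg (by nlinarith [Real.sqrt_nonneg 2]), if_neg (not_le.2 h')]
  · subst h'
    rw [catoni_mid (by nlinarith [Real.sqrt_nonneg 2]) le_rfl]
    linear_combination -sqrt2_cube / 6

lemma catoni_bound (y : ℝ) : |catoniPhi y| ≤ 2 * Real.sqrt 2 / 3 := by
  have hs : Real.sqrt 2 ^ 2 = 2 := Real.sq_sqrt (by norm_num)
  have hs0 : 0 ≤ Real.sqrt 2 := Real.sqrt_nonneg 2
  rcases le_or_gt y (-Real.sqrt 2) with h | h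
  · rw [catoni_left h, abs_neg, abs_of_nonneg (by positivity)]
  rcases le_or_gt (Real.sqrt 2) y with h2 | h2
  · rw [catoni_right h2, abs_of_nonneg (by positivity)]
  · rw [catoni_mid h.le h2.le, abs_le]
    constructor
    · nlinarith [mul_nonneg (sq_nonneg (Real.sqrt 2 + y))
        (by linarith : (0:ℝ) ≤ 2 * Real.sqrt 2 - y)]
    · nlinarith [mul_nonneg (sq_nonneg (Real.sqrt 2 - y))
        (by linarith : (0:ℝ) ≤ 2 * Real.sqrt 2 + y)]

lemma catoni_measurable : Measurable catoniPhi := by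
  unfold catoniPhi
  exact Measurable.ite (measurableSet_lt measurable_id measurable_const) measurable_const
    (Measurable.ite (measurableSet_le measurable_id measurable_const)
      (by fun_prop) measurable_const)

lemma ftcQ (A1 A2 A3 c d : ℝ) :
    ∫ x in c..d, (A1*x + A2*(x^2-1) + A3*x^3) * stdP x
      = (-((Real.sqrt (2*Real.pi))⁻¹ * ((A1 + A2*d + A3*(d^2+2)) * Real.exp (-d^2/2))))
        - (-((Real.sqrt (2*Real.pi))⁻¹ * ((A1 + A2*c + A3*(c^2+2)) * Real.exp (-c^2/2)))) := by
  have key : ∀ x : ℝ, HasDerivAt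
      (fun x => -((Real.sqrt (2*Real.pi))⁻¹ * ((A1 + A2*x + A3*(x^2+2)) * Real.exp (-x^2/2))))
      ((A1*x + A2*(x^2-1) + A3*x^3) * stdP x) x := by
    intro x
    have h1 : HasDerivAt (fun x : ℝ => -x^2/2) (-x) x := by
      have := ((hasDerivAt_pow 2 x).neg.div_const 2)
      exact this.congr_deriv (by ring)
    have hexp := h1.exp
    have hpoly : HasDerivAt (fun x : ℝ => A1 + A2*x + A3*(x^2+2)) (A2 + A3*(2*x)) x := by
      have h2 : HasDerivAt (fun x : ℝ => A2 * x) A2 x := by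
        simpa using (hasDerivAt_id x).const_mul A2
      have h3 : HasDerivAt (fun x : ℝ => A3 * (x^2 + 2)) (A3 * (2*x)) x := by
        have := ((hasDerivAt_pow 2 x).add_const 2).const_mul A3
        exact this.congr_deriv (by ring)
      exact (((hasDerivAt_const x A1).add h2).add h3).congr_deriv (by ring)
    have := ((hpoly.mul hexp).const_mul ((Real.sqrt (2*Real.pi))⁻¹)).neg
    exact this.congr_deriv (by unfold stdP; ring)
  apply intervalIntegral.integral_eq_sub_of_hasDerivAt (fun x _ => key x)
  apply Continuous.intervalIntegrable
  have : Continuous stdP := by unfold stdP; fun_prop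
  fun_prop

/-- Closed form for the Gaussian smoothing of the Catoni truncation function:
`E[φ(a + bY)] = a(1 − b²/2) − a³/6 + C(a, b)` for `Y` standard Gaussian. -/
theorem stmt_12 (a b : ℝ) (hb : 0 < b) :
    ∫ y, catoniPhi (a + b * y) ∂(gaussianReal 0 1) =
      a * (1 - b ^ 2 / 2) - a ^ 3 / 6 + catoniCorrection a b := by
  have hb' : b ≠ 0 := hb.ne'
  set Vm : ℝ := (Real.sqrt 2 - a) / b with hVm
  set Vp : ℝ := (Real.sqrt 2 + a) / b with hVp
  have hcd : -Vp ≤ Vm := by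
    rw [hVm, hVp, ← neg_div]
    gcongr
    nlinarith [Real.sqrt_nonneg 2]
  -- step 1: move to Lebesgue integral
  have h0 : ∫ y, catoniPhi (a + b * y) ∂(gaussianReal 0 1)
      = ∫ y, catoniPhi (a + b * y) * stdP y := by
    rw [gaussianReal_of_var_ne_zero 0 one_ne_zero]
    have hpdf : gaussianPDF 0 1 = fun x => ((gaussianPDFReal 0 1 x).toNNReal : ENNReal) := rfl
    rw [hpdf, integral_withDensity_eq_integral_smul
      ((measurable_gaussianPDFReal 0 1).real_toNNReal) _]
    refine integral_congr_ae (Filter.Eventually.of_forall fun x => ?_)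
    simp only [NNReal.smul_def, smul_eq_mul,
      stdP_eq, Real.coe_toNNReal _ (stdP_nonneg x), mul_comm]
  rw [h0]
  -- integrability
  have hI : Integrable (fun y => catoniPhi (a + b * y) * stdP y) :=
    Integrable.bdd_mul (c := 2 * Real.sqrt 2 / 3) stdP_integrable
      ((catoni_measurable.comp (by fun_prop : Measurable fun y : ℝ => a + b * y)).aestronglyMeasurable)
      (Filter.Eventually.of_forall fun x => by rw [Real.norm_eq_abs]; exact catoni_bound _)
  -- split the integral
  have hsplit : ∫ y, catoniPhi (a + b * y) * stdP y
      = (∫ y in Set.Iic (-Vp), catoniPhi (a + b * y) * stdP y)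
        + (∫ y in Set.Ioc (-Vp) Vm, catoniPhi (a + b * y) * stdP y)
        + (∫ y in Set.Ioi Vm, catoniPhi (a + b * y) * stdP y) := by
    rw [← intervalIntegral.integral_Iic_add_Ioi (b := Vm) hI.integrableOn hI.integrableOn,
      ← Set.Iic_union_Ioc_eq_Iic hcd,
      setIntegral_union (Set.Iic_disjoint_Ioc le_rfl) measurableSet_Ioc
        hI.integrableOn hI.integrableOn]
  rw [hsplit]
  -- left piece
  have hleft : ∫ y in Set.Iic (-Vp), catoniPhi (a + b * y) * stdP y
      = -(2 * Real.sqrt 2 / 3) * stdGaussCDF (-Vp) := by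
    rw [← stdP_cdf, ← integral_const_mul]
    refine setIntegral_congr_fun measurableSet_Iic fun x hx => ?_
    rw [catoni_left]
    have : x ≤ -Vp := hx
    rw [hVp] at this
    have hxb : b * x ≤ -(Real.sqrt 2 + a) := by
      rw [← neg_div] at this
      calc b * x = x * b := mul_comm _ _
      _ ≤ -(Real.sqrt 2 + a) := (le_div_iff₀ hb).1 this
    linarith
  -- right piece
  have hright : ∫ y in Set.Ioi Vm, catoniPhi (a + b * y) * stdP y
      = (2 * Real.sqrt 2 / 3) * stdGaussCDF (-Vm) := by
    rw [← stdP_tail, ← integral_const_mul]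
    refine setIntegral_congr_fun measurableSet_Ioi fun x hx => ?_
    rw [catoni_right]
    have : Vm ≤ x := le_of_lt hx
    rw [hVm] at this
    have hxb : Real.sqrt 2 - a ≤ b * x := by
      calc Real.sqrt 2 - a ≤ x * b := (div_le_iff₀ hb).1 this
      _ = b * x := mul_comm _ _
    linarith
  -- middle piece
  have hmid : ∫ y in Set.Ioc (-Vp) Vm, catoniPhi (a + b * y) * stdP y
      = ((a - a^3/6) + (-(a*b^2/2))) * (stdGaussCDF Vm - stdGaussCDF (-Vp))
        + ((-((Real.sqrt (2*Real.pi))⁻¹ * (((b - a^2*b/2) + (-(a*b^2/2))*Vm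
            + (-(b^3/6))*(Vm^2+2)) * Real.exp (-Vm^2/2))))
          - (-((Real.sqrt (2*Real.pi))⁻¹ * (((b - a^2*b/2) + (-(a*b^2/2))*(-Vp)
            + (-(b^3/6))*((-Vp)^2+2)) * Real.exp (-(-Vp)^2/2))))) := by
    rw [← intervalIntegral.integral_of_le hcd]
    have hcongr : ∫ y in (-Vp)..Vm, catoniPhi (a + b * y) * stdP y
        = ∫ y in (-Vp)..Vm,
            (((a - a^3/6) + (-(a*b^2/2))) * stdP y
              + ((b - a^2*b/2)*y + (-(a*b^2/2))*(y^2-1) + (-(b^3/6))*y^3) * stdP y) := by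
      refine intervalIntegral.integral_congr fun x hx => ?_
      rw [Set.uIcc_of_le hcd] at hx
      have hx1 : -Real.sqrt 2 ≤ a + b * x := by
        have h1 : -Vp ≤ x := hx.1
        rw [hVp, ← neg_div] at h1
        have := (div_le_iff₀ hb).1 h1
        linarith [mul_comm x b]
      have hx2 : a + b * x ≤ Real.sqrt 2 := by
        have h1 : x ≤ Vm := hx.2
        rw [hVm] at h1
        have := (le_div_iff₀ hb).1 h1
        linarith [mul_comm x b]
      rw [catoni_mid hx1 hx2]
      ring
    rw [hcongr, intervalIntegral.integral_add, intervalIntegral.integral_const_mul,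
      stdP_interval, ftcQ]
    · apply Continuous.intervalIntegrable
      have : Continuous stdP := by unfold stdP; fun_prop
      fun_prop
    · apply Continuous.intervalIntegrable
      have : Continuous stdP := by unfold stdP; fun_prop
      fun_prop
  rw [hleft, hright, hmid]
  -- assemble
  have hsym : stdGaussCDF Vm = 1 - stdGaussCDF (-Vm) := stdGaussCDF_symm Vm
  rw [hsym]
  have hcc : catoniCorrection a b =
      2 * Real.sqrt 2 / 3 * (stdGaussCDF (-Vm) - stdGaussCDF (-Vp))
        + -(a - a ^ 3 / 6) * (stdGaussCDF (-Vm) + stdGaussCDF (-Vp))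
        + b / Real.sqrt (2 * Real.pi) * (1 - a ^ 2 / 2)
            * (Real.exp (-Vp ^ 2 / 2) - Real.exp (-Vm ^ 2 / 2))
        + a * b ^ 2 / 2 * (stdGaussCDF (-Vp) + stdGaussCDF (-Vm)
            + 1 / Real.sqrt (2 * Real.pi)
              * (Vp * Real.exp (-Vp ^ 2 / 2) + Vm * Real.exp (-Vm ^ 2 / 2)))
        + b ^ 3 / (6 * Real.sqrt (2 * Real.pi))
            * ((2 + Vm ^ 2) * Real.exp (-Vm ^ 2 / 2)
              - (2 + Vp ^ 2) * Real.exp (-Vp ^ 2 / 2)) := rfl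
  rw [hcc]
  have hsq : (-Vp)^2 = Vp^2 := neg_sq Vp
  rw [hsq]
  have hpi : Real.sqrt (2 * Real.pi) ≠ 0 :=
    ne_of_gt (Real.sqrt_pos.2 (by positivity))
  field_simp
  ring
end
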